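/- For every i in {0,...,m-1}, the relation <_{B_i} is a strict partial order on B_i (irreflexive and transitive); moreover, two vertices w,w' in B_i are incomparable in <_{B_i} if and only if N(w) = N(w'). -/

import Mathlib

open SimpleGraph

/-- `c` is a hole (induced cycle on at least 5 vertices) in `G`:
the images of consecutive indices are adjacent, and these are the only adjacencies. -/
def IsHoleEmb {V : Type*} (G : SimpleGraph V) (n : ℕ) (c : ZMod n → V) : Prop :=
  5 ≤ n ∧ Function.Injective c ∧
    ∀ i j : ZMod n, G.Adj (c i) (c j) ↔ (j = i + 1 ∨ i = j + 1)

/-- The triangle `K₃`. -/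
def graphK3 : SimpleGraph (Fin 3) := ⊤

/-- `T₂`: the star `K_{1,3}` with every edge subdivided once. -/
def graphT2 : SimpleGraph (Fin 7) :=
  SimpleGraph.fromRel (fun i j =>
    (i, j) ∈ [((0 : Fin 7), (1 : Fin 7)), (0, 2), (0, 3), (1, 4), (2, 5), (3, 6)])

/-- `X₂`: a 4-cycle `0 1 2 3` with pendant vertices `4, 5, 6` attached at `0, 1, 2`. -/
def graphX2 : SimpleGraph (Fin 7) :=
  SimpleGraph.fromRel (fun i j =>
    (i, j) ∈ [((0 : Fin 7), (1 : Fin 7)), (1, 2), (2, 3), (3, 0), (0, 4), (1, 5), (2, 6)])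

/-- `X₃`: a path `0 1 2 3 4`, a vertex `5` adjacent to `0, 2, 4`, and a pendant `6` at `5`. -/
def graphX3 : SimpleGraph (Fin 7) :=
  SimpleGraph.fromRel (fun i j =>
    (i, j) ∈ [((0 : Fin 7), (1 : Fin 7)), (1, 2), (2, 3), (3, 4), (5, 0), (5, 2), (5, 4), (5, 6)])

/-- The cycle `C_n` on `ZMod n`. -/
def cycleG (n : ℕ) : SimpleGraph (ZMod n) :=
  SimpleGraph.fromRel (fun i j => j = i + 1)

/-- `G` contains an induced copy of `H`. -/
def ContainsInduced {W V : Type*} (H : SimpleGraph W) (G : SimpleGraph V) : Prop :=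
  Nonempty (H ↪g G)

/-- An almost bipartite permutation graph: no induced `K₃`, `T₂`, `X₂`, `X₃`,
nor `C_k` for `k ∈ {5,…,9}`. -/
def AlmostBPG {V : Type*} (G : SimpleGraph V) : Prop :=
  ¬ ContainsInduced graphK3 G ∧ ¬ ContainsInduced graphT2 G ∧
    ¬ ContainsInduced graphX2 G ∧ ¬ ContainsInduced graphX3 G ∧
    ∀ k : ℕ, 5 ≤ k → k ≤ 9 → ¬ ContainsInduced (cycleG k) G

/-- `c` is a shortest hole in `G`. -/
def ShortestHole {V : Type*} (G : SimpleGraph V) (m : ℕ) (c : ZMod m → V) : Prop :=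
  IsHoleEmb G m c ∧ ∀ (n : ℕ) (c' : ZMod n → V), IsHoleEmb G n c' → m ≤ n

/-- `A_i = {v : N(v) ∩ C = {c_{i-1}, c_{i+1}}}`. -/
def Ai {V : Type*} (G : SimpleGraph V) (m : ℕ) (c : ZMod m → V) (i : ZMod m) : Set V :=
  {v | G.neighborSet v ∩ Set.range c = {c (i - 1), c (i + 1)}}

/-- `B_i = {v : N(v) ∩ C = {c_i}}`. -/
def Bi {V : Type*} (G : SimpleGraph V) (m : ℕ) (c : ZMod m → V) (i : ZMod m) : Set V :=
  {v | G.neighborSet v ∩ Set.range c = {c i}}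

/-- `A[i,j] = A_i ∪ B_{i+1} ∪ A_{i+2} ∪ …` for integers `i ≤ j`. -/
def Ablk {V : Type*} (G : SimpleGraph V) (m : ℕ) (c : ZMod m → V) (i j : ℤ) : Set V :=
  {v | ∃ k : ℤ, i ≤ k ∧ k ≤ j ∧
    ((Even (k - i) ∧ v ∈ Ai G m c (k : ZMod m)) ∨ (Odd (k - i) ∧ v ∈ Bi G m c (k : ZMod m)))}

/-- `B[i,j] = B_i ∪ A_{i+1} ∪ B_{i+2} ∪ …` for integers `i ≤ j`. -/
def Bblk {V : Type*} (G : SimpleGraph V) (m : ℕ) (c : ZMod m → V) (i j : ℤ) : Set V :=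
  {v | ∃ k : ℤ, i ≤ k ∧ k ≤ j ∧
    ((Even (k - i) ∧ v ∈ Bi G m c (k : ZMod m)) ∨ (Odd (k - i) ∧ v ∈ Ai G m c (k : ZMod m)))}

/-- `V[i,j] = A[i,j] ∪ B[i,j]`. -/
def Vblk {V : Type*} (G : SimpleGraph V) (m : ℕ) (c : ZMod m → V) (i j : ℤ) : Set V :=
  Ablk G m c i j ∪ Bblk G m c i j

/-- The relation `<_{A_i}`. -/
def ltA {V : Type*} (G : SimpleGraph V) (m : ℕ) (c : ZMod m → V) (i : ZMod m)
    (u u' : V) : Prop :=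
  (∃ w ∈ Bi G m c (i - 2) ∪ Ai G m c (i - 1), G.Adj w u ∧ ¬ G.Adj w u') ∨
  (∃ w ∈ Ai G m c (i + 1) ∪ Bi G m c (i + 2), G.Adj w u' ∧ ¬ G.Adj w u)

/-- The relation `<_{B_i}`. -/
def ltB {V : Type*} (G : SimpleGraph V) (m : ℕ) (c : ZMod m → V) (i : ZMod m)
    (w w' : V) : Prop :=
  (∃ u ∈ Ai G m c (i - 2) ∪ Bi G m c (i - 1), G.Adj u w ∧ ¬ G.Adj u w') ∨
  (∃ u ∈ Bi G m c (i + 1) ∪ Ai G m c (i + 2), G.Adj u w' ∧ ¬ G.Adj u w)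

/-- `r` is a strict linear order on the set `S`. -/
def IsStrictLinearOrderOn {V : Type*} (S : Set V) (r : V → V → Prop) : Prop :=
  (∀ a ∈ S, ¬ r a a) ∧
    (∀ a ∈ S, ∀ b ∈ S, ∀ d ∈ S, r a b → r b d → r a d) ∧
    (∀ a ∈ S, ∀ b ∈ S, a ≠ b → r a b ∨ r b a)

/-- `L` extends `r` on the set `S`. -/
def ExtendsOn {V : Type*} (S : Set V) (r L : V → V → Prop) : Prop :=
  ∀ a ∈ S, ∀ b ∈ S, r a b → L a b

/-- `v` is the maximum of `(S, L)`. -/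
def IsMaxOf {V : Type*} (S : Set V) (L : V → V → Prop) (v : V) : Prop :=
  v ∈ S ∧ ∀ z ∈ S, z ≠ v → L z v

/-- `v` is the minimum of `(S, L)`. -/
def IsMinOf {V : Type*} (S : Set V) (L : V → V → Prop) (v : V) : Prop :=
  v ∈ S ∧ ∀ z ∈ S, z ≠ v → L v z

/-- `v, v'` belong to `S`, `L v v'`, and they are consecutive in `(S, L)`. -/
def ConsecIn {V : Type*} (S : Set V) (L : V → V → Prop) (v v' : V) : Prop :=
  v ∈ S ∧ v' ∈ S ∧ L v v' ∧ ¬ ∃ z ∈ S, L v z ∧ L z v'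

/-- The relation `≺` built from the chosen linear orders `LA i` on `A_i` and `LB i` on `B_i`. -/
def precRel {V : Type*} (G : SimpleGraph V) (m : ℕ) (c : ZMod m → V)
    (LA LB : ZMod m → V → V → Prop) (v v' : V) : Prop :=
  ∃ i : ZMod m,
    ConsecIn (Ai G m c i) (LA i) v v' ∨
    ConsecIn (Bi G m c i) (LB i) v v' ∨
    (IsMaxOf (Ai G m c i) (LA i) v ∧ IsMinOf (Bi G m c (i + 1)) (LB (i + 1)) v') ∨
    (IsMaxOf (Bi G m c i) (LB i) v ∧ IsMinOf (Ai G m c (i + 1)) (LA (i + 1)) v')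

/-- `<_{V'}`: the transitive closure of `≺` restricted to `V'`. -/
def ltOn {V : Type*} (G : SimpleGraph V) (m : ℕ) (c : ZMod m → V)
    (LA LB : ZMod m → V → V → Prop) (V' : Set V) : V → V → Prop :=
  Relation.TransGen (fun a b => a ∈ V' ∧ b ∈ V' ∧ precRel G m c LA LB a b)

/-- The relation `<_cl`. -/
def ltCl {V : Type*} (G : SimpleGraph V) (m : ℕ) (c : ZMod m → V)
    (LA LB : ZMod m → V → V → Prop) (v v' : V) : Prop :=
  ∃ i : ℕ, i < m ∧
    ((v ∈ Ablk G m c ((i : ℤ) - 2) ((i : ℤ) + 2) ∧ v' ∈ Ablk G m c ((i : ℤ) - 2) ((i : ℤ) + 2) ∧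
        ltOn G m c LA LB (Ablk G m c ((i : ℤ) - 2) ((i : ℤ) + 2)) v v') ∨
      (v ∈ Bblk G m c ((i : ℤ) - 2) ((i : ℤ) + 2) ∧ v' ∈ Bblk G m c ((i : ℤ) - 2) ((i : ℤ) + 2) ∧
        ltOn G m c LA LB (Bblk G m c ((i : ℤ) - 2) ((i : ℤ) + 2)) v v'))

/-- `r` is a transitive orientation of `G`. -/
def IsTransOrient {V : Type*} (G : SimpleGraph V) (r : V → V → Prop) : Prop :=
  (∀ v, ¬ r v v) ∧ (∀ a b d, r a b → r b d → r a d) ∧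
    ∀ u v, u ≠ v → ((r u v ∨ r v u) ↔ G.Adj u v)

/-- A permutation graph: both `G` and its complement admit transitive orientations. -/
def IsPermGraph {V : Type*} (G : SimpleGraph V) : Prop :=
  (∃ r, IsTransOrient G r) ∧ ∃ r, IsTransOrient Gᶜ r

/-- A bipartite permutation graph. -/
def IsBPG {V : Type*} (G : SimpleGraph V) : Prop :=
  G.Colorable 2 ∧ IsPermGraph G

/-- `X` is a hole cut of `G`: `G - X` is a bipartite permutation graph. -/
def IsHoleCut {V : Type*} (G : SimpleGraph V) (X : Set V) : Prop :=
  IsBPG (G.induce Xᶜ)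

/-- The adjacency property: for every `u ∈ U`, `N(u)` consists of vertices
consecutive in `(W, r)`. -/
def AdjProperty {V : Type*} (G : SimpleGraph V) (U W : Set V) (r : V → V → Prop) : Prop :=
  ∀ u ∈ U, ∀ w ∈ W, ∀ w' ∈ W, ∀ w'' ∈ W,
    r w w' → r w' w'' → G.Adj u w → G.Adj u w'' → G.Adj u w'

/-- The enclosure property: for `u, u' ∈ U` with `N(u) ⊆ N(u')`, the set `N(u') \ N(u)`
consists of vertices consecutive in `(W, r)`. -/
def EncProperty {V : Type*} (G : SimpleGraph V) (U W : Set V) (r : V → V → Prop) : Prop :=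
  ∀ u ∈ U, ∀ u' ∈ U, G.neighborSet u ∩ W ⊆ G.neighborSet u' ∩ W →
    ∀ w ∈ W, ∀ w' ∈ W, ∀ w'' ∈ W, r w w' → r w' w'' →
      (G.Adj u' w ∧ ¬ G.Adj u w) → (G.Adj u' w'' ∧ ¬ G.Adj u w'') →
        (G.Adj u' w' ∧ ¬ G.Adj u w')

/-- `(U, rU)` and `(W, rW)` form a strong ordering of `U ∪ W`. -/
def StrongOrdering {V : Type*} (G : SimpleGraph V) (U W : Set V)
    (rU rW : V → V → Prop) : Prop :=
  ∀ u ∈ U, ∀ u' ∈ U, ∀ w ∈ W, ∀ w' ∈ W,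
    G.Adj u w' → G.Adj u' w → rU u u' → rW w w' → G.Adj u w ∧ G.Adj u' w'

/-- `S` induces in `G` one of the graphs `K₃, T₂, X₂, X₃, C₅, …, C₉`. -/
def IsForbiddenSet {V : Type*} (G : SimpleGraph V) (S : Set V) : Prop :=
  Nonempty (graphK3 ≃g G.induce S) ∨ Nonempty (graphT2 ≃g G.induce S) ∨
    Nonempty (graphX2 ≃g G.induce S) ∨ Nonempty (graphX3 ≃g G.induce S) ∨
    ∃ k : ℕ, 5 ≤ k ∧ k ≤ 9 ∧ Nonempty (cycleG k ≃g G.induce S)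

/-!
With `L = A_{i-2} ∪ B_{i-1}` and `R = B_{i+1} ∪ A_{i+2}`, `w <_{B_i} w'` says that some vertex
of `L` sees `w` but not `w'`, or some vertex of `R` sees `w'` but not `w`. A relation of this
shape is a strict order on `B_i` as soon as the neighbourhoods in `B_i` of the vertices of `L`
form a chain, so do those of `R`, and no `u ∈ L`, `v ∈ R` share a neighbour in `B_i` while both
missing another one. A failure of the chain conditions gives an induced `T₂` centred at `c_i`,
a failure of the last one an induced `X₂`. Two elements of `B_i` are incomparable iff they have
the same neighbours in `L ∪ R`, and this is the same as having the same neighbourhood: `A_i` is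
complete to `B_i` (again by `X₂`), and every neighbour of `w ∈ B_i` off the hole lies in
`A_i ∪ L ∪ R`. For the latter, minimality of the hole shows that such a neighbour `z` sees
`c_{i+1}` or `c_{i-1}` (otherwise `T₂`), and that consecutive neighbours of `z` along the hole
are at distance two (distance one is a triangle, a longer gap closes a shorter hole), while `z`
cannot see all of `w, c_{i+1}, c_{i+3}, c_{i+5}` (that is an `X₃`).
-/

section SidePrec

variable {α β : Type*} (r : α → β → Prop) (L R : Set α)

def sidePrec (w w' : β) : Prop :=
  (∃ u ∈ L, r u w ∧ ¬ r u w') ∨ (∃ u ∈ R, r u w' ∧ ¬ r u w)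

/-- The `r`-neighbourhoods in `B` of the elements of `L` form a chain under inclusion. -/
def IsNested (B : Set β) : Prop :=
  ∀ u ∈ L, ∀ u' ∈ L, ∀ w ∈ B, ∀ w' ∈ B, r u w → ¬ r u w' → r u' w' → r u' w

variable {r L R}

lemma sidePrec_irrefl (w : β) : ¬ sidePrec r L R w w := by
  rintro (⟨u, -, h, h'⟩ | ⟨u, -, h, h'⟩) <;> exact h' h

lemma sidePrec_trans {B : Set β} (hL : IsNested r L B) (hR : IsNested r R B)
    (hLR : ∀ u ∈ L, ∀ v ∈ R, ∀ w ∈ B, ∀ w' ∈ B, r u w → ¬ r u w' → r v w → r v w')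
    {w w' w'' : β} (hw : w ∈ B) (hw' : w' ∈ B) (hw'' : w'' ∈ B) :
    sidePrec r L R w w' → sidePrec r L R w' w'' → sidePrec r L R w w'' := by
  rintro (⟨u, hu, huw, huw'⟩ | ⟨v, hv, hvw', hvw⟩)
    (⟨u₂, hu₂, hu₂w', hu₂w''⟩ | ⟨v₂, hv₂, hv₂w'', hv₂w'⟩)
  · exact .inl ⟨u, hu, huw, fun h => hu₂w'' (hL u hu u₂ hu₂ w'' hw'' w' hw' h huw' hu₂w')⟩
  · exact .inr ⟨v₂, hv₂, hv₂w'', fun h => hv₂w' (hLR u hu v₂ hv₂ w hw w' hw' huw huw' h)⟩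
  · by_cases hu₂w : r u₂ w
    · exact .inl ⟨u₂, hu₂, hu₂w, hu₂w''⟩
    · exact (hvw (hLR u₂ hu₂ v hv w' hw' w hw hu₂w' hu₂w hvw')).elim
  · exact .inr ⟨v₂, hv₂, hv₂w'', fun h => hvw (hR v₂ hv₂ v hv w hw w' hw' h hv₂w' hvw')⟩

lemma not_sidePrec_and_not_sidePrec_iff {w w' : β} :
    ¬ sidePrec r L R w w' ∧ ¬ sidePrec r L R w' w ↔ ∀ u ∈ L ∪ R, r u w ↔ r u w' := by
  constructor
  · rintro ⟨h, h'⟩ u (hu | hu)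
    · exact ⟨fun huw => by_contra fun huw' => h (.inl ⟨u, hu, huw, huw'⟩),
        fun huw' => by_contra fun huw => h' (.inl ⟨u, hu, huw', huw⟩)⟩
    · exact ⟨fun huw => by_contra fun huw' => h' (.inr ⟨u, hu, huw, huw'⟩),
        fun huw' => by_contra fun huw => h (.inr ⟨u, hu, huw', huw⟩)⟩
  · intro h
    refine ⟨?_, ?_⟩ <;> rintro (⟨u, hu, h₁, h₂⟩ | ⟨u, hu, h₁, h₂⟩)
    · exact h₂ ((h u (.inl hu)).1 h₁)
    · exact h₂ ((h u (.inr hu)).2 h₁)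
    · exact h₂ ((h u (.inl hu)).2 h₁)
    · exact h₂ ((h u (.inr hu)).1 h₁)

end SidePrec

section ZModOffsets

variable {m : ℕ}

lemma ZMod.intCast_eq_intCast_iff_of_lt {k l : ℤ} (h₁ : k - l < m) (h₂ : l - k < m) :
    (k : ZMod m) = l ↔ k = l := by
  rw [ZMod.intCast_eq_intCast_iff_dvd_sub]
  refine ⟨fun h => ?_, fun h => by simp [h]⟩
  have := Int.eq_zero_of_abs_lt_dvd h (abs_lt.2 ⟨by omega, by omega⟩)
  omega

lemma ZMod.eq_add_one_iff_val {n : ℕ} (hn : 2 ≤ n) (a b : ZMod n) :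
    b = a + 1 ↔ b.val = a.val + 1 ∨ (a.val + 1 = n ∧ b.val = 0) := by
  have : NeZero n := ⟨by omega⟩
  have ha := a.val_lt
  have hb := b.val_lt
  rw [← ZMod.val_injective n |>.eq_iff, ZMod.val_add, ZMod.val_one'' (by omega)]
  rcases Nat.lt_or_ge (a.val + 1) n with h | h
  · rw [Nat.mod_eq_of_lt h]; omega
  · rw [show a.val + 1 = n by omega, Nat.mod_self]; omega

lemma ZMod.exists_eq_add_intCast [NeZero m] (i x : ZMod m) (a : ℤ) :
    ∃ t : ℤ, a ≤ t ∧ t < a + m ∧ x = i + t := by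
  refine ⟨a + (x - i - a).val, by omega, by have := (x - i - a).val_lt; omega, ?_⟩
  push_cast
  rw [ZMod.natCast_zmod_val]
  ring

lemma ZMod.add_intCast_eq_add_intCast_iff (i : ZMod m) {k l : ℤ} (h₁ : k - l < m)
    (h₂ : l - k < m) : i + (k : ZMod m) = i + l ↔ k = l := by
  rw [add_right_inj, ZMod.intCast_eq_intCast_iff_of_lt h₁ h₂]

lemma ZMod.intCast_add_self (k : ℤ) : ((k + m : ℤ) : ZMod m) = k := by
  push_cast
  rw [ZMod.natCast_self, add_zero]

end ZModOffsets

section Forbidden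

instance : DecidableRel graphT2.Adj := by unfold graphT2; infer_instance
instance : DecidableRel graphX2.Adj := by unfold graphX2; infer_instance
instance : DecidableRel graphX3.Adj := by unfold graphX3; infer_instance

variable {V : Type*} {G : SimpleGraph V}

/-- `f` is injective because no two vertices of `H` have the same neighbourhood. -/
lemma containsInduced_of_adj_iff {W : Type*} {H : SimpleGraph W}
    (hH : ∀ a b, (∀ x, H.Adj a x ↔ H.Adj b x) → a = b) (f : W → V)
    (hf : ∀ a b, G.Adj (f a) (f b) ↔ H.Adj a b) : ContainsInduced H G := by
  refine ⟨⟨⟨f, fun a b hab => hH a b fun x => ?_⟩, hf _ _⟩⟩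
  rw [← hf, ← hf, hab]

lemma cliqueFree_three_of_not_containsInduced (hK3 : ¬ ContainsInduced graphK3 G) :
    G.CliqueFree 3 :=
  by_contra fun h => hK3 ⟨topEmbeddingOfNotCliqueFree h⟩

lemma SimpleGraph.CliqueFree.not_adj_of_adj {a b d : V} (hG : G.CliqueFree 3) (hab : G.Adj a b)
    (hbd : G.Adj b d) : ¬ G.Adj a d := by
  classical
  exact fun had => hG {a, b, d} (is3Clique_triple_iff.2 ⟨hab, had, hbd⟩)

section

-- In a triangle-free graph only the non-edges that no triangle forces need to be checked.

variable (hG : G.CliqueFree 3)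
include hG

lemma containsInduced_graphT2 {x a a' b b' d d' : V}
    (hxa : G.Adj x a) (hxb : G.Adj x b) (hxd : G.Adj x d)
    (haa : G.Adj a a') (hbb : G.Adj b b') (hdd : G.Adj d d')
    (h₁ : ¬ G.Adj a b') (h₂ : ¬ G.Adj a d') (h₃ : ¬ G.Adj b a') (h₄ : ¬ G.Adj b d')
    (h₅ : ¬ G.Adj d a') (h₆ : ¬ G.Adj d b') (h₇ : ¬ G.Adj a' b') (h₈ : ¬ G.Adj a' d')
    (h₉ : ¬ G.Adj b' d') : ContainsInduced graphT2 G := by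
  have := hG.not_adj_of_adj hxa haa
  have := hG.not_adj_of_adj hxb hbb
  have := hG.not_adj_of_adj hxd hdd
  have := hG.not_adj_of_adj hxa.symm hxb
  have := hG.not_adj_of_adj hxa.symm hxd
  have := hG.not_adj_of_adj hxb.symm hxd
  refine containsInduced_of_adj_iff (by decide) ![x, a, b, d, a', b', d'] fun i j => ?_
  fin_cases i <;> fin_cases j <;> simp_all [graphT2, G.adj_comm]

lemma containsInduced_graphX2 {b c d u p q r : V}
    (hbc : G.Adj b c) (hcd : G.Adj c d) (hdu : G.Adj d u) (hub : G.Adj u b)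
    (hbp : G.Adj b p) (hcq : G.Adj c q) (hdr : G.Adj d r)
    (h₁ : ¬ G.Adj b r) (h₂ : ¬ G.Adj d p) (h₃ : ¬ G.Adj u q) (h₄ : ¬ G.Adj p q)
    (h₅ : ¬ G.Adj p r) (h₆ : ¬ G.Adj q r) : ContainsInduced graphX2 G := by
  have := hG.not_adj_of_adj hbc hcd
  have := hG.not_adj_of_adj hcd hdu
  have := hG.not_adj_of_adj hbp.symm hbc
  have := hG.not_adj_of_adj hbp.symm hub.symm
  have := hG.not_adj_of_adj hcq.symm hbc.symm
  have := hG.not_adj_of_adj hcq.symm hcd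
  have := hG.not_adj_of_adj hdr.symm hcd.symm
  have := hG.not_adj_of_adj hdr.symm hdu
  refine containsInduced_of_adj_iff (by decide) ![b, c, d, u, p, q, r] fun i j => ?_
  fin_cases i <;> fin_cases j <;> simp_all [graphX2, G.adj_comm]

lemma containsInduced_graphX3 {a b c d e x y : V}
    (hab : G.Adj a b) (hbc : G.Adj b c) (hcd : G.Adj c d) (hde : G.Adj d e)
    (hxa : G.Adj x a) (hxc : G.Adj x c) (hxe : G.Adj x e) (hxy : G.Adj x y)
    (h₁ : ¬ G.Adj a d) (h₂ : ¬ G.Adj b e) (h₃ : ¬ G.Adj y b) (h₄ : ¬ G.Adj y d) :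
    ContainsInduced graphX3 G := by
  have := hG.not_adj_of_adj hab hbc
  have := hG.not_adj_of_adj hbc hcd
  have := hG.not_adj_of_adj hcd hde
  have := hG.not_adj_of_adj hxa.symm hxc
  have := hG.not_adj_of_adj hxa.symm hxe
  have := hG.not_adj_of_adj hxc.symm hxe
  have := hG.not_adj_of_adj hxa hab
  have := hG.not_adj_of_adj hxc hcd
  have := hG.not_adj_of_adj hxy.symm hxa
  have := hG.not_adj_of_adj hxy.symm hxc
  have := hG.not_adj_of_adj hxy.symm hxe
  refine containsInduced_of_adj_iff (by decide) ![a, b, c, d, e, x, y] fun i j => ?_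
  fin_cases i <;> fin_cases j <;> simp_all [graphX3, G.adj_comm]

end

end Forbidden

section InducedPath

variable {V : Type*} {G : SimpleGraph V}

def IsInducedPath (G : SimpleGraph V) (d : ℕ) (e : ℕ → V) : Prop :=
  Set.InjOn e (Set.Iic d) ∧ ∀ k ≤ d, ∀ l ≤ d, G.Adj (e k) (e l) ↔ (l = k + 1 ∨ k = l + 1)

lemma IsInducedPath.cons {d : ℕ} {e : ℕ → V} {x : V} (he : IsInducedPath G d e)
    (hx₀ : G.Adj x (e 0)) (hx : ∀ k, 0 < k → k ≤ d → ¬ G.Adj x (e k))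
    (hxe : ∀ k ≤ d, x ≠ e k) :
    IsInducedPath G (d + 1) (fun k => if k = 0 then x else e (k - 1)) := by
  have hadj : ∀ k, 0 < k → k ≤ d + 1 → (G.Adj x (e (k - 1)) ↔ k = 1) := fun k hk₀ hk => by
    rcases Nat.lt_or_ge k 2 with h | h
    · simpa [show k = 1 by omega] using hx₀
    · simpa [show k ≠ 1 by omega] using hx (k - 1) (by omega) (by omega)
  refine ⟨fun k hk l hl h => ?_, fun k hk l hl => ?_⟩
  · simp only [Set.mem_Iic] at hk hl h
    rcases Nat.eq_zero_or_pos k with rfl | hk₀ <;> rcases Nat.eq_zero_or_pos l with rfl | hl₀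
    · rfl
    · simp only [if_true, hl₀.ne', if_false] at h; exact (hxe _ (by omega) h).elim
    · simp only [if_true, hk₀.ne', if_false] at h; exact (hxe _ (by omega) h.symm).elim
    · simp only [hk₀.ne', hl₀.ne', if_false] at h
      have := he.1 (Set.mem_Iic.2 (by omega)) (Set.mem_Iic.2 (by omega)) h; omega
  · rcases Nat.eq_zero_or_pos k with rfl | hk₀ <;> rcases Nat.eq_zero_or_pos l with rfl | hl₀
    · simp
    · simp only [if_true, hl₀.ne', if_false, hadj l hl₀ hl]; omega
    · simp only [if_true, hk₀.ne', if_false, G.adj_comm _ x, hadj k hk₀ hk]; omega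
    · simp only [hk₀.ne', hl₀.ne', if_false, he.2 (k - 1) (by omega) (l - 1) (by omega)]
      omega

lemma IsInducedPath.isHoleEmb_close {d : ℕ} {e : ℕ → V} {z : V} (he : IsInducedPath G d e)
    (hd : 3 ≤ d) (hz₀ : G.Adj z (e 0)) (hzd : G.Adj z (e d))
    (hz : ∀ k, 0 < k → k < d → ¬ G.Adj z (e k)) (hze : ∀ k ≤ d, z ≠ e k) :
    IsHoleEmb G (d + 2) (fun a => if a.val ≤ d then e a.val else z) := by
  set g : ℕ → V := fun k => if k ≤ d then e k else z
  have hgz : ∀ k, d < k → g k = z := fun k hk => if_neg (by omega)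
  have hge : ∀ k ≤ d, g k = e k := fun k hk => if_pos hk
  have hzg : ∀ k ≤ d, G.Adj z (g k) ↔ k = 0 ∨ k = d := fun k hk => by
    rw [hge k hk]
    refine ⟨fun h => by_contra fun h' => hz k (by omega) (by omega) h, ?_⟩
    rintro (rfl | rfl) <;> assumption
  have hadj : ∀ k < d + 2, ∀ l < d + 2, G.Adj (g k) (g l) ↔
      (l = k + 1 ∨ k = l + 1 ∨ (k + 1 = d + 2 ∧ l = 0) ∨ (l + 1 = d + 2 ∧ k = 0)) := by
    intro k hk l hl
    rcases Nat.lt_or_ge d k with h | h <;> rcases Nat.lt_or_ge d l with h' | h'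
    · rw [hgz k h, hgz l h']; simp only [G.irrefl, false_iff]; omega
    · rw [hgz k h, hzg l h']; omega
    · rw [hgz l h', G.adj_comm, hzg k h]; omega
    · rw [hge k h, hge l h', he.2 k h l h']; omega
  refine ⟨by omega, fun a b hab => ?_, fun a b => ?_⟩
  · have ha := a.val_lt; have hb := b.val_lt
    refine ZMod.val_injective _ ?_
    by_contra hne
    change g a.val = g b.val at hab
    rcases Nat.lt_or_ge d a.val with h | h <;> rcases Nat.lt_or_ge d b.val with h' | h'
    · omega
    · exact hze _ h' (by rw [← hge _ h', ← hab, hgz _ h])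
    · exact hze _ h (by rw [← hge _ h, hab, hgz _ h'])
    · exact hne (he.1 (Set.mem_Iic.2 h) (Set.mem_Iic.2 h') (by rwa [hge _ h, hge _ h'] at hab))
  · change G.Adj (g a.val) (g b.val) ↔ _
    rw [hadj _ a.val_lt _ b.val_lt, ZMod.eq_add_one_iff_val (by omega),
      ZMod.eq_add_one_iff_val (by omega)]
    omega

end InducedPath

lemma Set.inter_range_eq_image_iff {ι V : Type*} {c : ι → V} (hc : Function.Injective c)
    {s : Set V} {t : Set ι} : s ∩ Set.range c = c '' t ↔ ∀ x, c x ∈ s ↔ x ∈ t := by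
  refine ⟨fun h x => ?_, fun h => ?_⟩
  · simpa [hc.eq_iff] using Set.ext_iff.1 h (c x)
  · ext y
    constructor
    · rintro ⟨hy, x, rfl⟩; exact ⟨x, (h x).1 hy, rfl⟩
    · rintro ⟨x, hx, rfl⟩; exact ⟨(h x).2 hx, x, rfl⟩

section Hole

-- Vertices of the hole near position `i` are written `c (i + k)` with `k : ℤ`, so that
-- adjacency and equality among them become linear arithmetic on the offsets.

variable {V : Type*} {G : SimpleGraph V} {m : ℕ} {c : ZMod m → V}

lemma mem_Ai_iff (hc : Function.Injective c) {j : ZMod m} {u : V} :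
    u ∈ Ai G m c j ↔ ∀ x, G.Adj u (c x) ↔ x = j - 1 ∨ x = j + 1 := by
  change _ ∩ _ = _ ↔ _
  rw [← Set.image_pair, Set.inter_range_eq_image_iff hc]
  rfl

lemma mem_Bi_iff (hc : Function.Injective c) {j : ZMod m} {w : V} :
    w ∈ Bi G m c j ↔ ∀ x, G.Adj w (c x) ↔ x = j := by
  change _ ∩ _ = _ ↔ _
  rw [← Set.image_singleton, Set.inter_range_eq_image_iff hc]
  rfl

lemma IsHoleEmb.mem_Ai (hC : IsHoleEmb G m c) (j : ZMod m) : c j ∈ Ai G m c j := by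
  rw [mem_Ai_iff hC.2.1]
  intro x
  rw [hC.2.2, eq_sub_iff_add_eq, eq_comm (a := j)]
  tauto

lemma IsHoleEmb.notMem_range_of_mem_Bi (hC : IsHoleEmb G m c) {j : ZMod m} {w : V}
    (hw : w ∈ Bi G m c j) : w ∉ Set.range c := by
  rintro ⟨x, rfl⟩
  have h := (mem_Bi_iff hC.2.1).1 hw
  have h₁ := (h (x + 1)).1 ((hC.2.2 _ _).2 (.inl rfl))
  have h₂ := (h (x - 1)).1 ((hC.2.2 _ _).2 (.inr (sub_add_cancel x 1).symm))
  have h₃ : ((2 : ℤ) : ZMod m) = ((0 : ℤ) : ZMod m) := by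
    push_cast; linear_combination h₁ - h₂
  rw [ZMod.intCast_eq_intCast_iff_of_lt (by have := hC.1; omega) (by omega)] at h₃
  omega

lemma IsHoleEmb.comp_neg (hC : IsHoleEmb G m c) : IsHoleEmb G m (fun j => c (-j)) := by
  refine ⟨hC.1, hC.2.1.comp neg_injective, fun x y => ?_⟩
  have h : ∀ x y : ZMod m, -y = -x + 1 ↔ x = y + 1 := fun x y => by
    constructor <;> intro h <;> linear_combination h
  rw [hC.2.2, h, h, or_comm]

lemma ShortestHole.comp_neg (hC : ShortestHole G m c) : ShortestHole G m (fun j => c (-j)) :=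
  ⟨hC.1.comp_neg, hC.2⟩

lemma Ai_comp_neg (hc : Function.Injective c) (j : ZMod m) :
    Ai G m (fun j => c (-j)) j = Ai G m c (-j) := by
  ext u
  rw [mem_Ai_iff (c := fun j => c (-j)) (hc.comp neg_injective), mem_Ai_iff hc,
    neg_surjective.forall]
  simp only [neg_neg, neg_eq_iff_eq_neg, neg_sub', neg_add', sub_neg_eq_add]
  exact forall_congr' fun x => by rw [or_comm]

lemma Bi_comp_neg (hc : Function.Injective c) (j : ZMod m) :
    Bi G m (fun j => c (-j)) j = Bi G m c (-j) := by
  ext w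
  rw [mem_Bi_iff (c := fun j => c (-j)) (hc.comp neg_injective), mem_Bi_iff hc,
    neg_surjective.forall]
  simp only [neg_neg, neg_eq_iff_eq_neg]

lemma mem_Ai_add_intCast_iff (hc : Function.Injective c) {i : ZMod m} {a : ℤ} {u : V} :
    u ∈ Ai G m c (i + a) ↔
      ∀ x, G.Adj u (c x) ↔ x = i + (a - 1 : ℤ) ∨ x = i + (a + 1 : ℤ) := by
  rw [mem_Ai_iff hc]
  push_cast
  simp only [add_sub_assoc, add_assoc]

lemma adj_add_intCast_iff_of_mem_Bi (hc : Function.Injective c) {i : ZMod m} {a k : ℤ}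
    {w : V} (hw : w ∈ Bi G m c (i + a)) (h₁ : k - a < m) (h₂ : a - k < m) :
    G.Adj w (c (i + k)) ↔ k = a := by
  rw [(mem_Bi_iff hc).1 hw, ZMod.add_intCast_eq_add_intCast_iff i h₁ h₂]

lemma adj_add_intCast_iff_of_mem_Ai (hc : Function.Injective c) {i : ZMod m} {a k : ℤ}
    {u : V} (hu : u ∈ Ai G m c (i + a)) (h₁ : k - a + 1 < m) (h₂ : a - k + 1 < m) :
    G.Adj u (c (i + k)) ↔ k = a - 1 ∨ k = a + 1 := by
  rw [(mem_Ai_add_intCast_iff hc).1 hu,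
    ZMod.add_intCast_eq_add_intCast_iff i (by omega) (by omega),
    ZMod.add_intCast_eq_add_intCast_iff i (by omega) (by omega)]

lemma IsHoleEmb.adj_add_intCast_iff (hC : IsHoleEmb G m c) (i : ZMod m) {k l : ℤ}
    (h₁ : k - l + 2 ≤ m) (h₂ : l - k + 2 ≤ m) :
    G.Adj (c (i + k)) (c (i + l)) ↔ l = k - 1 ∨ l = k + 1 :=
  adj_add_intCast_iff_of_mem_Ai hC.2.1 (hC.mem_Ai _) (by omega) (by omega)

lemma mem_Bi_add_intCast_of_forall [NeZero m] (hc : Function.Injective c) {i : ZMod m}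
    {a : ℤ} {w : V} (h : ∀ t : ℤ, a ≤ t → t < a + m → (G.Adj w (c (i + t)) ↔ t = a)) :
    w ∈ Bi G m c (i + a) := by
  refine (mem_Bi_iff hc).2 fun x => ?_
  obtain ⟨t, ht₁, ht₂, rfl⟩ := ZMod.exists_eq_add_intCast i x a
  rw [h t ht₁ ht₂, ZMod.add_intCast_eq_add_intCast_iff i (by omega) (by omega)]

lemma mem_Ai_add_intCast_of_forall [NeZero m] (hc : Function.Injective c) (hm : 3 ≤ m)
    {i : ZMod m} {a : ℤ} {u : V} (h : ∀ t : ℤ, a - 1 ≤ t → t < a - 1 + m →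
      (G.Adj u (c (i + t)) ↔ t = a - 1 ∨ t = a + 1)) :
    u ∈ Ai G m c (i + a) := by
  refine (mem_Ai_add_intCast_iff hc).2 fun x => ?_
  obtain ⟨t, ht₁, ht₂, rfl⟩ := ZMod.exists_eq_add_intCast i x (a - 1)
  rw [h t ht₁ ht₂, ZMod.add_intCast_eq_add_intCast_iff i (by omega) (by omega),
    ZMod.add_intCast_eq_add_intCast_iff i (by omega) (by omega)]

lemma IsHoleEmb.add_intCast_eq_iff (hC : IsHoleEmb G m c) (i : ZMod m) {k l : ℤ}
    (h₁ : k - l < m) (h₂ : l - k < m) : c (i + k) = c (i + l) ↔ k = l := by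
  rw [hC.2.1.eq_iff, ZMod.add_intCast_eq_add_intCast_iff i h₁ h₂]

lemma IsHoleEmb.isInducedPath_arc (hC : IsHoleEmb G m c) (i : ZMod m) (a : ℤ) {d : ℕ}
    (hd : d + 2 ≤ m) : IsInducedPath G d (fun n => c (i + (a + n : ℤ))) := by
  refine ⟨fun k hk l hl h => ?_, fun k hk l hl => ?_⟩
  · rw [Set.mem_Iic] at hk hl
    rw [hC.add_intCast_eq_iff i (by omega) (by omega)] at h
    omega
  · rw [hC.adj_add_intCast_iff i (by omega) (by omega)]
    omega

end Hole

section Sides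

variable {V : Type*} {G : SimpleGraph V} {m : ℕ} {c : ZMod m → V}

def leftSide (G : SimpleGraph V) (m : ℕ) (c : ZMod m → V) (i : ZMod m) : Set V :=
  Ai G m c (i - 2) ∪ Bi G m c (i - 1)

def rightSide (G : SimpleGraph V) (m : ℕ) (c : ZMod m → V) (i : ZMod m) : Set V :=
  Bi G m c (i + 1) ∪ Ai G m c (i + 2)

lemma ltB_eq_sidePrec (i : ZMod m) :
    ltB G m c i = sidePrec G.Adj (leftSide G m c i) (rightSide G m c i) := rfl

lemma leftSide_comp_neg (hc : Function.Injective c) (i : ZMod m) :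
    leftSide G m (fun j => c (-j)) (-i) = rightSide G m c i := by
  rw [leftSide, rightSide, Ai_comp_neg hc, Bi_comp_neg hc, Set.union_comm]
  congr 2 <;> ring

variable (hC : IsHoleEmb G m c) (hm : 10 ≤ m)
include hC hm

lemma IsHoleEmb.adj_iff_of_mem_leftSide {i : ZMod m} {u : V} (hu : u ∈ leftSide G m c i)
    (k : ℤ) (hk₁ : -1 ≤ k) (hk₂ : k ≤ 5) : G.Adj u (c (i + k)) ↔ k = -1 := by
  rcases hu with hu | hu
  · rw [adj_add_intCast_iff_of_mem_Ai hC.2.1 (a := -2) (by simpa [sub_eq_add_neg] using hu)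
      (by omega) (by omega)]
    omega
  · rw [adj_add_intCast_iff_of_mem_Bi hC.2.1 (a := -1) (by simpa [sub_eq_add_neg] using hu)
      (by omega) (by omega)]

lemma IsHoleEmb.adj_iff_of_mem_rightSide {i : ZMod m} {v : V} (hv : v ∈ rightSide G m c i)
    (k : ℤ) (hk₁ : -5 ≤ k) (hk₂ : k ≤ 1) : G.Adj v (c (i + k)) ↔ k = 1 := by
  rcases hv with hv | hv
  · rw [adj_add_intCast_iff_of_mem_Bi hC.2.1 (a := 1) (by simpa using hv) (by omega) (by omega)]
  · rw [adj_add_intCast_iff_of_mem_Ai hC.2.1 (a := 2) (by simpa using hv) (by omega) (by omega)]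
    omega

lemma IsHoleEmb.adj_iff_of_mem_Bi {i : ZMod m} {w : V} (hw : w ∈ Bi G m c i) (k : ℤ)
    (hk₁ : -5 ≤ k) (hk₂ : k ≤ 5) : G.Adj w (c (i + k)) ↔ k = 0 :=
  adj_add_intCast_iff_of_mem_Bi hC.2.1 (a := 0) (by simpa using hw) (by omega) (by omega)

variable (hK3 : G.CliqueFree 3)
include hK3

lemma IsHoleEmb.isNested_leftSide (hT2 : ¬ ContainsInduced graphT2 G) (i : ZMod m) :
    IsNested G.Adj (leftSide G m c i) (Bi G m c i) := by
  intro u hu u' hu' w hw w' hw' huw huw' hu'w'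
  by_contra hu'w
  have hwc := hC.adj_iff_of_mem_Bi hm hw
  have hw'c := hC.adj_iff_of_mem_Bi hm hw'
  have huc := hC.adj_iff_of_mem_leftSide hm hu
  have hu'c := hC.adj_iff_of_mem_leftSide hm hu'
  have huu' : ¬ G.Adj u u' := hK3.not_adj_of_adj ((huc (-1) le_rfl (by omega)).2 rfl)
    ((hu'c (-1) le_rfl (by omega)).2 rfl).symm
  refine hT2 (containsInduced_graphT2 hK3 (x := c (i + (0 : ℤ))) (a := c (i + (1 : ℤ)))
    (a' := c (i + (2 : ℤ))) (b := w) (b' := u) (d := w') (d' := u') ?_ ?_ ?_ ?_ huw.symm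
    hu'w'.symm ?_ ?_ ?_ (fun h => hu'w h.symm) ?_ (fun h => huw' h.symm) ?_ ?_ huu')
  all_goals first
    | (rw [hC.adj_add_intCast_iff] <;> omega)
    | (rw [G.adj_comm, hwc] <;> omega)
    | (rw [G.adj_comm, hw'c] <;> omega)
    | (rw [hwc] <;> omega)
    | (rw [hw'c] <;> omega)
    | (rw [G.adj_comm, huc] <;> omega)
    | (rw [G.adj_comm, hu'c] <;> omega)

lemma IsHoleEmb.isNested_rightSide (hT2 : ¬ ContainsInduced graphT2 G) (i : ZMod m) :
    IsNested G.Adj (rightSide G m c i) (Bi G m c i) := by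
  have h := hC.comp_neg.isNested_leftSide hm hK3 hT2 (-i)
  rwa [leftSide_comp_neg hC.2.1, Bi_comp_neg hC.2.1, neg_neg] at h

lemma IsHoleEmb.adj_of_mem_leftSide_of_mem_rightSide (hX2 : ¬ ContainsInduced graphX2 G)
    (i : ZMod m) :
    ∀ u ∈ leftSide G m c i, ∀ v ∈ rightSide G m c i, ∀ w ∈ Bi G m c i, ∀ w' ∈ Bi G m c i,
      G.Adj u w → ¬ G.Adj u w' → G.Adj v w → G.Adj v w' := by
  intro u hu v hv w hw w' hw' huw huw' hvw
  by_contra hvw'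
  have hwc := hC.adj_iff_of_mem_Bi hm hw
  have hw'c := hC.adj_iff_of_mem_Bi hm hw'
  have huc := hC.adj_iff_of_mem_leftSide hm hu
  have hvc := hC.adj_iff_of_mem_rightSide hm hv
  refine hX2 (containsInduced_graphX2 hK3 (b := c (i + (1 : ℤ))) (c := c (i + (0 : ℤ)))
    (d := w) (u := v) (p := c (i + (2 : ℤ))) (q := w') (r := u) ?_ ?_ hvw.symm ?_ ?_ ?_ huw.symm
    ?_ ?_ hvw' ?_ ?_ (fun h => huw' h.symm))
  all_goals first
    | (rw [hC.adj_add_intCast_iff] <;> omega)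
    | (rw [hwc] <;> omega)
    | (rw [G.adj_comm, hwc] <;> omega)
    | (rw [G.adj_comm, hw'c] <;> omega)
    | (rw [G.adj_comm, huc] <;> omega)
    | (rw [hvc] <;> omega)

lemma IsHoleEmb.adj_of_mem_Ai_of_mem_Bi (hX2 : ¬ ContainsInduced graphX2 G) {i : ZMod m}
    {u w : V} (hu : u ∈ Ai G m c i) (hw : w ∈ Bi G m c i) : G.Adj u w := by
  by_contra huw
  have hwc := hC.adj_iff_of_mem_Bi hm hw
  have huc : ∀ k : ℤ, -5 ≤ k → k ≤ 5 → (G.Adj u (c (i + k)) ↔ k = -1 ∨ k = 1) :=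
    fun k _ _ => by
      rw [adj_add_intCast_iff_of_mem_Ai hC.2.1 (a := 0) (by simpa using hu) (by omega)
        (by omega)]
      omega
  refine hX2 (containsInduced_graphX2 hK3 (b := c (i + (1 : ℤ))) (c := c (i + (0 : ℤ)))
    (d := c (i + (-1 : ℤ))) (u := u) (p := c (i + (2 : ℤ))) (q := w) (r := c (i + (-2 : ℤ)))
    ?_ ?_ ?_ ?_ ?_ ?_ ?_ ?_ ?_ huw ?_ ?_ ?_)
  all_goals first
    | (rw [hC.adj_add_intCast_iff] <;> omega)
    | (rw [hwc] <;> omega)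
    | (rw [G.adj_comm, hwc] <;> omega)
    | (rw [huc] <;> omega)
    | (rw [G.adj_comm, huc] <;> omega)

lemma IsHoleEmb.not_adj_add_five (hX3 : ¬ ContainsInduced graphX3 G)
    {w z : V} {i : ZMod m} (hw : w ∈ Bi G m c i) (hzw : G.Adj z w)
    (hz₁ : G.Adj z (c (i + (1 : ℤ)))) (hz₃ : G.Adj z (c (i + (3 : ℤ)))) :
    ¬ G.Adj z (c (i + (5 : ℤ))) := by
  have hwc := hC.adj_iff_of_mem_Bi hm hw
  intro hz₅
  refine hX3 (containsInduced_graphX3 hK3 (a := c (i + (3 : ℤ))) (b := c (i + (2 : ℤ)))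
    (c := c (i + (1 : ℤ))) (d := c (i + (0 : ℤ))) (e := w) (x := z) (y := c (i + (5 : ℤ)))
    ?_ ?_ ?_ ?_ hz₃ hz₁ hzw hz₅ ?_ ?_ ?_ ?_)
  all_goals first
    | (rw [hC.adj_add_intCast_iff] <;> omega)
    | (rw [G.adj_comm, hwc] <;> omega)

end Sides

section Neighbours

variable {V : Type*} {G : SimpleGraph V} {m : ℕ} {c : ZMod m → V}
  (hC : ShortestHole G m c) (hK3 : G.CliqueFree 3)
include hC hK3

/-- A gap of one between neighbours of `z` on the hole is a triangle, a gap of at least three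
closes a hole shorter than `c`. -/
lemma ShortestHole.adj_add_two {z : V} (hz : z ∉ Set.range c) {i : ZMod m} {a b : ℤ}
    (hab : a < b) (hbm : b - a + 3 ≤ m) (hza : G.Adj z (c (i + a)))
    (hzb : G.Adj z (c (i + b))) : G.Adj z (c (i + (a + 2 : ℤ))) := by
  classical
  have hzb' : G.Adj z (c (i + (a + (b - a).toNat : ℤ))) := by
    rwa [Int.toNat_of_nonneg (by omega), add_sub_cancel]
  have hex : ∃ k : ℕ, 0 < k ∧ G.Adj z (c (i + (a + k : ℤ))) := ⟨_, by omega, hzb'⟩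
  obtain ⟨hk₀, hzk⟩ := Nat.find_spec hex
  have hkb := Nat.find_min' hex ⟨by omega, hzb'⟩
  rcases (by omega : Nat.find hex = 1 ∨ Nat.find hex = 2 ∨ 3 ≤ Nat.find hex) with h | h | h
  · rw [h] at hzk
    refine absurd hzk (hK3.not_adj_of_adj hza ?_)
    rw [hC.1.adj_add_intCast_iff] <;> push_cast <;> omega
  · rwa [h] at hzk
  · have hole := (hC.1.isInducedPath_arc i a (d := Nat.find hex) (by omega)).isHoleEmb_close
      h
      (by simpa using hza) hzk (fun l hl hlk => (Nat.find_min hex hlk ⟨hl, ·⟩))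
      (fun l _ h => hz ⟨_, h.symm⟩)
    have := hC.2 _ _ hole
    omega

/-- Otherwise `w`, `c i`, …, the first neighbour of `z` after `c i`, and `z` form a hole
shorter than `c`. -/
lemma ShortestHole.adj_add_one_of_mem_Bi {w z : V} (hz : z ∉ Set.range c) {i : ZMod m}
    (hw : w ∈ Bi G m c i) (hzw : G.Adj z w) {b : ℤ} (hb : 0 < b) (hbm : b + 4 ≤ m)
    (hzb : G.Adj z (c (i + b))) : G.Adj z (c (i + (1 : ℤ))) := by
  classical
  have hzb' : G.Adj z (c (i + ((0 : ℤ) + b.toNat : ℤ))) := by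
    rwa [Int.toNat_of_nonneg hb.le, zero_add]
  have hex : ∃ k : ℕ, 0 < k ∧ G.Adj z (c (i + ((0 : ℤ) + k : ℤ))) := ⟨_, by omega, hzb'⟩
  obtain ⟨hk₀, hzk⟩ := Nat.find_spec hex
  have hkb := Nat.find_min' hex ⟨by omega, hzb'⟩
  have hwc : ∀ k : ℤ, 0 ≤ k → k + 4 ≤ m → (G.Adj w (c (i + k)) ↔ k = 0) := fun k _ _ =>
    adj_add_intCast_iff_of_mem_Bi hC.1.2.1 (a := 0) (by simpa using hw) (by omega) (by omega)
  have hzi : ¬ G.Adj z (c (i + ((0 : ℤ) + (0 : ℕ) : ℤ))) :=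
    hK3.not_adj_of_adj hzw ((hwc _ (by omega) (by omega)).2 (by omega))
  by_contra hz₁
  have hk : 2 ≤ Nat.find hex := by
    by_contra h
    exact hz₁ (by convert hzk using 4; omega)
  have path := (hC.1.isInducedPath_arc i 0 (d := Nat.find hex) (by omega)).cons (x := w)
    ((hwc _ (by omega) (by omega)).2 (by omega))
    (fun k _ _ => by rw [hwc _ (by omega) (by omega)]; omega)
    (fun k _ h => hC.1.notMem_range_of_mem_Bi hw ⟨_, h.symm⟩)
  have hole := path.isHoleEmb_close (z := z) (by omega) (by simpa using hzw)
    (by simpa using hzk)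
    (fun l hl _ => by
      rw [if_neg hl.ne']
      rcases (by omega : l = 1 ∨ 1 < l) with rfl | h
      · exact hzi
      · exact (Nat.find_min hex (by omega : l - 1 < Nat.find hex) ⟨by omega, ·⟩))
    (fun l _ h => by split_ifs at h; exacts [hzw.ne h, hz ⟨_, h.symm⟩])
  have := hC.2 _ _ hole
  omega

lemma ShortestHole.adj_sub_one_of_mem_Bi {w z : V} (hz : z ∉ Set.range c) {i : ZMod m}
    (hw : w ∈ Bi G m c i) (hzw : G.Adj z w) {b : ℤ} (hb : b < 0) (hbm : 4 - b ≤ m)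
    (hzb : G.Adj z (c (i + b))) : G.Adj z (c (i + (-1 : ℤ))) := by
  have h := hC.comp_neg.adj_add_one_of_mem_Bi hK3 (i := -i) (b := -b)
    (fun ⟨x, hx⟩ => hz ⟨-x, hx⟩) (by rwa [Bi_comp_neg hC.1.2.1, neg_neg]) hzw (by omega) (by omega)
    (by convert hzb using 3; push_cast; ring)
  convert h using 3
  push_cast
  ring

/-- Otherwise `z` has no neighbour on the hole at all, and `c i` is the centre of a `T₂`. -/
lemma ShortestHole.adj_add_one_or_adj_sub_one_of_mem_Bi (hm : 10 ≤ m)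
    (hT2 : ¬ ContainsInduced graphT2 G) {w z : V} (hz : z ∉ Set.range c) {i : ZMod m}
    (hw : w ∈ Bi G m c i) (hzw : G.Adj z w) :
    G.Adj z (c (i + (1 : ℤ))) ∨ G.Adj z (c (i + (-1 : ℤ))) := by
  have : NeZero m := ⟨by omega⟩
  have hwc := hC.1.adj_iff_of_mem_Bi hm hw
  by_contra! h
  have hzc : ∀ x, ¬ G.Adj z (c x) := by
    intro x hx
    obtain ⟨t, ht₁, ht₂, rfl⟩ := ZMod.exists_eq_add_intCast i x (-3)
    rcases lt_trichotomy t 0 with ht | rfl | ht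
    · exact h.2 (hC.adj_sub_one_of_mem_Bi hK3 hz hw hzw ht (by omega) hx)
    · exact hK3.not_adj_of_adj hzw ((hwc 0 (by omega) (by omega)).2 rfl) hx
    · exact h.1 (hC.adj_add_one_of_mem_Bi hK3 hz hw hzw ht (by omega) hx)
  refine hT2 (containsInduced_graphT2 hK3 (x := c (i + (0 : ℤ))) (a := c (i + (1 : ℤ)))
    (a' := c (i + (2 : ℤ))) (b := c (i + (-1 : ℤ))) (b' := c (i + (-2 : ℤ))) (d := w) (d' := z)
    ?_ ?_ ?_ ?_ ?_ hzw.symm ?_ (fun h => hzc _ h.symm) ?_ (fun h => hzc _ h.symm) ?_ ?_ ?_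
    (fun h => hzc _ h.symm) (fun h => hzc _ h.symm))
  all_goals first
    | (rw [hC.1.adj_add_intCast_iff] <;> omega)
    | (rw [hwc] <;> omega)
    | (rw [G.adj_comm, hwc] <;> omega)

lemma ShortestHole.mem_of_adj_add_one (hm : 10 ≤ m) (hX3 : ¬ ContainsInduced graphX3 G)
    {w z : V} (hz : z ∉ Set.range c) {i : ZMod m} (hw : w ∈ Bi G m c i) (hzw : G.Adj z w)
    (hz₁ : G.Adj z (c (i + (1 : ℤ)))) :
    z ∈ Ai G m c (i + (0 : ℤ)) ∨ z ∈ Bi G m c (i + (1 : ℤ)) ∨ z ∈ Ai G m c (i + (2 : ℤ)) := by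
  have : NeZero m := ⟨by omega⟩
  have hz₀ : ¬ G.Adj z (c (i + (0 : ℤ))) :=
    hK3.not_adj_of_adj hzw ((hC.1.adj_iff_of_mem_Bi hm hw 0 (by omega) (by omega)).2 rfl)
  have hz₂ : ¬ G.Adj z (c (i + (2 : ℤ))) :=
    hK3.not_adj_of_adj hz₁ (by rw [hC.1.adj_add_intCast_iff] <;> omega)
  have hz₅ := hC.1.not_adj_add_five hm hK3 hX3 hw hzw hz₁
  by_cases hzm₁ : G.Adj z (c (i + (-1 : ℤ)))
  · left
    refine mem_Ai_add_intCast_of_forall hC.1.2.1 (by omega) fun t ht₁ ht₂ => ⟨fun hzt => ?_, ?_⟩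
    · by_contra hne
      have ht : 2 ≤ t := by
        rcases (by omega : t = -1 ∨ t = 0 ∨ t = 1 ∨ 2 ≤ t) with rfl | rfl | rfl | h
        exacts [(hne (by omega)).elim, (hz₀ hzt).elim, (hne (by omega)).elim, h]
      have hz₃ : G.Adj z (c (i + (3 : ℤ))) := hC.adj_add_two hK3 hz (by omega) (by omega) hz₁ hzt
      exact hz₅ hz₃ (hC.adj_add_two hK3 hz (a := 3) (b := -1 + m) (by omega) (by omega) hz₃
        (by rwa [ZMod.intCast_add_self]))
    · rintro (rfl | rfl)
      exacts [hzm₁, hz₁]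
  · right
    have hzt : ∀ t : ℤ, 0 ≤ t → t ≤ m → G.Adj z (c (i + t)) → t = 1 ∨ t = 3 := by
      intro t ht₁ ht₂ hzt
      by_contra hne
      rcases (by omega : t = 0 ∨ t = 2 ∨ t = m ∨ 4 ≤ t ∧ t + 4 ≤ m ∨ m ≤ t + 3 ∧ t < m)
        with rfl | rfl | rfl | ht | ht
      · exact hz₀ hzt
      · exact hz₂ hzt
      · exact hz₀ (by rwa [← ZMod.intCast_add_self, zero_add])
      · have hz₃ : G.Adj z (c (i + (3 : ℤ))) := hC.adj_add_two hK3 hz (by omega) (by omega) hz₁ hzt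
        exact hz₅ hz₃ (hC.adj_add_two hK3 hz (by omega) (by omega) hz₃ hzt)
      · refine hzm₁ (hC.adj_sub_one_of_mem_Bi hK3 hz hw hzw (b := t - m) (by omega) (by omega) ?_)
        rwa [← ZMod.intCast_add_self, sub_add_cancel]
    by_cases hz₃ : G.Adj z (c (i + (3 : ℤ)))
    · refine .inr <| mem_Ai_add_intCast_of_forall hC.1.2.1 (by omega) fun t ht₁ ht₂ =>
        ⟨fun h => ?_, ?_⟩
      · rcases (by omega : t = 1 ∨ t = 0 ∨ 2 ≤ t) with rfl | rfl | ht
        · omega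
        · exact (hz₀ h).elim
        · have := hzt t (by omega) (by omega) h; omega
      · rintro (rfl | rfl)
        exacts [hz₁, hz₃]
    · refine .inl (mem_Bi_add_intCast_of_forall hC.1.2.1 fun t ht₁ ht₂ => ⟨fun h => ?_, ?_⟩)
      · rcases hzt t (by omega) (by omega) h with h' | rfl
        exacts [h', (hz₃ h).elim]
      · rintro rfl
        exact hz₁

lemma ShortestHole.mem_of_adj_of_mem_Bi (hm : 10 ≤ m) (hT2 : ¬ ContainsInduced graphT2 G)
    (hX3 : ¬ ContainsInduced graphX3 G) {w z : V} (hz : z ∉ Set.range c) {i : ZMod m}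
    (hw : w ∈ Bi G m c i) (hzw : G.Adj z w) :
    z ∈ Ai G m c i ∨ z ∈ leftSide G m c i ∪ rightSide G m c i := by
  rcases hC.adj_add_one_or_adj_sub_one_of_mem_Bi hK3 hm hT2 hz hw hzw with h | h
  · rcases hC.mem_of_adj_add_one hK3 hm hX3 hz hw hzw h with h | h | h
    · exact .inl (by simpa using h)
    · exact .inr (.inr (.inl (by simpa using h)))
    · exact .inr (.inr (.inr (by simpa using h)))
  · have h' := hC.comp_neg.mem_of_adj_add_one hK3 hm hX3 (i := -i) (fun ⟨x, hx⟩ => hz ⟨-x, hx⟩)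
      (by rwa [Bi_comp_neg hC.1.2.1, neg_neg]) hzw (by convert h using 3; push_cast; ring)
    rw [Ai_comp_neg hC.1.2.1, Bi_comp_neg hC.1.2.1, Ai_comp_neg hC.1.2.1] at h'
    rcases h' with h | h | h
    · exact .inl (by convert h using 2; push_cast; ring)
    · exact .inr (.inl (.inr (by convert h using 2; push_cast; ring)))
    · exact .inr (.inl (.inl (by convert h using 2; push_cast; ring)))

lemma ShortestHole.neighborSet_subset_of_forall_sides (hm : 10 ≤ m)
    (hT2 : ¬ ContainsInduced graphT2 G) (hX2 : ¬ ContainsInduced graphX2 G)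
    (hX3 : ¬ ContainsInduced graphX3 G) {i : ZMod m} {w w' : V} (hw : w ∈ Bi G m c i)
    (hw' : w' ∈ Bi G m c i)
    (h : ∀ u ∈ leftSide G m c i ∪ rightSide G m c i, G.Adj u w → G.Adj u w') :
    G.neighborSet w ⊆ G.neighborSet w' := by
  intro x hx
  by_cases hxc : x ∈ Set.range c
  · obtain ⟨j, rfl⟩ := hxc
    exact ((mem_Bi_iff hC.1.2.1).1 hw' j).2 (((mem_Bi_iff hC.1.2.1).1 hw j).1 hx)
  · rcases hC.mem_of_adj_of_mem_Bi hK3 hm hT2 hX3 hxc hw hx.symm with hx' | hx'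
    · exact (hC.1.adj_of_mem_Ai_of_mem_Bi hm hK3 hX2 hx' hw').symm
    · exact (h x hx' hx.symm).symm

lemma ShortestHole.neighborSet_eq_iff_forall_sides (hm : 10 ≤ m)
    (hT2 : ¬ ContainsInduced graphT2 G) (hX2 : ¬ ContainsInduced graphX2 G)
    (hX3 : ¬ ContainsInduced graphX3 G) {i : ZMod m} {w w' : V} (hw : w ∈ Bi G m c i)
    (hw' : w' ∈ Bi G m c i) :
    G.neighborSet w = G.neighborSet w' ↔
      ∀ u ∈ leftSide G m c i ∪ rightSide G m c i, G.Adj u w ↔ G.Adj u w' := by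
  refine ⟨fun h u _ => by rw [G.adj_comm, G.adj_comm u]; exact Set.ext_iff.1 h u, fun h => ?_⟩
  exact (hC.neighborSet_subset_of_forall_sides hK3 hm hT2 hX2 hX3 hw hw' fun u hu =>
    (h u hu).1).antisymm
      (hC.neighborSet_subset_of_forall_sides hK3 hm hT2 hX2 hX3 hw' hw fun u hu => (h u hu).2)

end Neighbours

theorem ltB_strict_partial_order_general {V : Type*} (G : SimpleGraph V) (hG : AlmostBPG G)
    (m : ℕ) (c : ZMod m → V) (hm : 10 ≤ m) (hC : ShortestHole G m c) :
    ∀ i : ZMod m,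
      (∀ w ∈ Bi G m c i, ¬ ltB G m c i w w) ∧
        (∀ w ∈ Bi G m c i, ∀ w' ∈ Bi G m c i, ∀ w'' ∈ Bi G m c i,
          ltB G m c i w w' → ltB G m c i w' w'' → ltB G m c i w w'') ∧
        ∀ w ∈ Bi G m c i, ∀ w' ∈ Bi G m c i,
          ((¬ ltB G m c i w w' ∧ ¬ ltB G m c i w' w) ↔
            G.neighborSet w = G.neighborSet w') := by
  obtain ⟨hK3, hT2, hX2, hX3, -⟩ := hG
  replace hK3 := cliqueFree_three_of_not_containsInduced hK3
  intro i
  simp only [ltB_eq_sidePrec]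
  refine ⟨fun w _ => sidePrec_irrefl w, fun w hw w' hw' w'' hw'' => ?_, fun w hw w' hw' => ?_⟩
  · exact sidePrec_trans (hC.1.isNested_leftSide hm hK3 hT2 i)
      (hC.1.isNested_rightSide hm hK3 hT2 i)
      (hC.1.adj_of_mem_leftSide_of_mem_rightSide hm hK3 hX2 i) hw hw' hw''
  · rw [not_sidePrec_and_not_sidePrec_iff,
      hC.neighborSet_eq_iff_forall_sides hK3 hm hT2 hX2 hX3 hw hw']

theorem ltB_strict_partial_order {V : Type*} (G : SimpleGraph V) (hconn : G.Connected) (hG : AlmostBPG G)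
    (m : ℕ) (c : ZMod m → V) (hm : 10 ≤ m) (hC : ShortestHole G m c) :
    ∀ i : ZMod m,
      (∀ w ∈ Bi G m c i, ¬ ltB G m c i w w) ∧
        (∀ w ∈ Bi G m c i, ∀ w' ∈ Bi G m c i, ∀ w'' ∈ Bi G m c i,
          ltB G m c i w w' → ltB G m c i w' w'' → ltB G m c i w w'') ∧
        ∀ w ∈ Bi G m c i, ∀ w' ∈ Bi G m c i,
          ((¬ ltB G m c i w w' ∧ ¬ ltB G m c i w' w) ↔
            G.neighborSet w = G.neighborSet w') :=
  ltB_strict_partial_order_general G hG m c hm hC
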